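/- Let α = [0; a₁, a₂, …] ∈ (0,1) be irrational with (aₙ) bounded, and let (qₙ) be the denominators of the convergents of α. Then t_{(qₙ)}(𝕋) = ⟨α⟩; that is, for β ∈ ℝ, ‖qₙβ‖ → 0 if and only if β ∈ ⟨α⟩ + ℤ. -/

import Mathlib

/-!
Let `rₙ` be the integer nearest to `qₙβ`. If `‖qₙβ‖ → 0` and the partial quotients are bounded
by `M`, then the integer `rₙ₊₂ - aₙ₊₂ rₙ₊₁ - rₙ` is eventually smaller than `1` in absolute value,
so `(rₙ)` eventually satisfies the recurrence of `(qₙ)` and `(pₙ)`. Since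
`qₙ pₙ₊₁ - qₙ₊₁ pₙ = ±1`, this forces `rₙ = k qₙ + l pₙ` for fixed integers `k, l`. Then
`qₙ (β - lα - k) = (qₙβ - rₙ) - l θₙ → 0`, where `θₙ = qₙα - pₙ → 0` geometrically, and `qₙ ≥ 1`
gives `β = lα + k`. Conversely, `qₙ (kα + l) ≡ k θₙ (mod 1)`.
-/

open Filter Topology

noncomputable section

/-- The circle group `𝕋 = ℝ/ℤ`. -/
abbrev Circle1 : Type := AddCircle (1 : ℝ)

/-- A set of naturals has natural density zero. -/
def DensityZero (A : Set ℕ) : Prop :=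
  Tendsto (fun n : ℕ => ((A ∩ Set.Icc 1 n).ncard : ℝ) / n) atTop (𝓝 0)

/-- Statistical convergence to `0` of a sequence in the circle. -/
def StatTendstoZero (x : ℕ → Circle1) : Prop :=
  ∀ ε : ℝ, 0 < ε → DensityZero {n : ℕ | ε ≤ ‖x n‖}

/-- The characterized subgroup `t_(a_n)(𝕋)`. -/
def charSet (a : ℕ → ℤ) : Set Circle1 :=
  {x : Circle1 | Tendsto (fun n : ℕ => a n • x) atTop (𝓝 0)}

/-- The statistically characterized subgroup `t^s_(a_n)(𝕋)`. -/
def statCharSet (a : ℕ → ℤ) : Set Circle1 :=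
  {x : Circle1 | StatTendstoZero (fun n : ℕ => a n • x)}

namespace CF

/-- Gauss-map orbit of `α`: `G α 0 = α`, `G α (n+1) = {1 / G α n}`. -/
def G (α : ℝ) : ℕ → ℝ
  | 0 => α
  | n + 1 => Int.fract (G α n)⁻¹

/-- The partial quotients of the regular continued fraction `α = [0; a 1, a 2, …]`
(with the convention `a 0 = 0`). -/
def a (α : ℝ) : ℕ → ℕ
  | 0 => 0
  | n + 1 => ⌊(G α n)⁻¹⌋₊

/-- Denominators of the convergents of the continued fraction of `α`. -/
def q (α : ℝ) : ℕ → ℕ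
  | 0 => 1
  | 1 => a α 1
  | (n + 2) => a α (n + 2) * q α (n + 1) + q α n

/-- Numerators of the convergents of the continued fraction of `α`. -/
def p (α : ℝ) : ℕ → ℕ
  | 0 => 0
  | 1 => 1
  | (n + 2) => a α (n + 2) * p α (n + 1) + p α n

/-- `θ n = q n * α - p n`. -/
def θ (α : ℝ) (n : ℕ) : ℝ := (q α n : ℝ) * α - (p α n : ℝ)

end CF

open CF

theorem exists_eq_linear_combination_of_recurrence {R : Type*} [CommRing R]
    {c u v r : ℕ → R} (hu : ∀ n, u (n + 2) = c n * u (n + 1) + u n)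
    (hv : ∀ n, v (n + 2) = c n * v (n + 1) + v n) (hr : ∀ n, r (n + 2) = c n * r (n + 1) + r n)
    (hdet : IsUnit (u 0 * v 1 - u 1 * v 0)) :
    ∃ k l : R, ∀ n, r n = k * u n + l * v n := by
  obtain ⟨e, he⟩ := hdet.exists_right_inv
  refine ⟨e * (r 0 * v 1 - r 1 * v 0), e * (u 0 * r 1 - u 1 * r 0), fun n => ?_⟩
  induction n using Nat.twoStepInduction with
  | zero => linear_combination (-r 0) * he
  | one => linear_combination (-r 1) * he
  | more n ih₀ ih₁ =>
    linear_combination hr n + c n * ih₁ + ih₀ - e * (r 0 * v 1 - r 1 * v 0) * hu n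
      - e * (u 0 * r 1 - u 1 * r 0) * hv n

theorem round_eq_mul_round_add_round {x y z δ : ℝ} {c : ℤ} (h : z = c * y + x)
    (hδ : (|(c : ℝ)| + 2) * δ ≤ 1) (hx : |x - round x| < δ) (hy : |y - round y| < δ)
    (hz : |z - round z| < δ) : round z = c * round y + round x := by
  have hd : ((round z - c * round y - round x : ℤ) : ℝ)
      = -(z - round z) + c * (y - round y) + (x - round x) := by
    push_cast
    linear_combination h
  have hlt : |((round z - c * round y - round x : ℤ) : ℝ)| < 1 := by
    rw [hd]
    calc |-(z - round z) + c * (y - round y) + (x - round x)|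
        ≤ |z - round z| + |(c : ℝ)| * |y - round y| + |x - round x| := by
          rw [← abs_mul, ← abs_neg (z - round z)]
          exact abs_add_three _ _ _
      _ < δ + |(c : ℝ)| * δ + δ := by
          have := mul_le_mul_of_nonneg_left hy.le (abs_nonneg (c : ℝ))
          linarith
      _ ≤ 1 := by linarith
  rw [← Int.cast_abs, ← Int.cast_one, Int.cast_lt, Int.abs_lt_one_iff] at hlt
  linarith

theorem tendsto_zero_of_abs_add_two_le_half {x : ℕ → ℝ}
    (h : ∀ n, |x (n + 2)| ≤ |x n| / 2) : Tendsto x atTop (𝓝 0) := by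
  set C := max |x 0| |x 1|
  have hbound : ∀ n, |x n| ≤ C * (1 / 2) ^ (n / 2) := by
    intro n
    induction n using Nat.twoStepInduction with
    | zero => simp [C]
    | one => simp [C]
    | more n ih₀ _ =>
      rw [show (n + 2) / 2 = n / 2 + 1 by omega, pow_succ]
      linarith [h n]
  have hgeom : Tendsto (fun n : ℕ => C * (1 / 2 : ℝ) ^ (n / 2)) atTop (𝓝 0) := by
    have hpow := tendsto_pow_atTop_nhds_zero_of_lt_one (by norm_num : (0 : ℝ) ≤ 1 / 2)
      (by norm_num)
    simpa using (hpow.comp (Nat.tendsto_div_const_atTop two_ne_zero)).const_mul C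
  exact squeeze_zero_norm hbound hgeom

theorem tendsto_sub_round_of_tendsto_zsmul {b : ℕ → ℤ} {β : ℝ}
    (h : Tendsto (fun n => b n • (β : Circle1)) atTop (𝓝 0)) :
    Tendsto (fun n => b n * β - round (b n * β)) atTop (𝓝 0) := by
  rw [tendsto_zero_iff_abs_tendsto_zero]
  rw [tendsto_zero_iff_norm_tendsto_zero] at h
  refine h.congr fun n => ?_
  rw [← AddCircle.coe_zsmul, zsmul_eq_mul, UnitAddCircle.norm_eq, Function.comp_apply]

theorem mem_zmultiples_coe_iff (α β : ℝ) :
    (β : Circle1) ∈ AddSubgroup.zmultiples (α : Circle1) ↔ ∃ k l : ℤ, β = k * α + l := by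
  have hint (m : ℤ) : ((m : ℝ) : Circle1) = 0 := (AddCircle.coe_eq_zero_iff 1).2 ⟨m, by simp⟩
  rw [AddSubgroup.mem_zmultiples_iff]
  constructor
  · rintro ⟨k, hk⟩
    rw [← AddCircle.coe_zsmul, ← sub_eq_zero, ← AddCircle.coe_sub, AddCircle.coe_eq_zero_iff] at hk
    obtain ⟨m, hm⟩ := hk
    exact ⟨k, -m, by simp only [zsmul_eq_mul, mul_one] at hm; push_cast; linarith⟩
  · rintro ⟨k, l, rfl⟩
    exact ⟨k, by rw [← AddCircle.coe_zsmul, zsmul_eq_mul, AddCircle.coe_add, hint, add_zero]⟩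

namespace CF

variable {α : ℝ}

theorem irrational_G (hirr : Irrational α) (n : ℕ) : Irrational (G α n) := by
  induction n with
  | zero => exact hirr
  | succ n ih => exact ih.inv.sub_intCast _

theorem G_mem_Ioo (hα : α ∈ Set.Ioo 0 1) (hirr : Irrational α) (n : ℕ) :
    G α n ∈ Set.Ioo 0 1 := by
  cases n with
  | zero => exact hα
  | succ n =>
    refine ⟨Int.fract_pos.2 fun h => ?_, Int.fract_lt_one _⟩
    exact (irrational_G hirr n).inv.ne_int _ h

theorem inv_G_eq {n : ℕ} (h : 0 ≤ G α n) : (G α n)⁻¹ = a α (n + 1) + G α (n + 1) := by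
  rw [a, G, natCast_floor_eq_intCast_floor (inv_nonneg.2 h), Int.floor_add_fract]

theorem one_le_a_succ {n : ℕ} (h : G α n ∈ Set.Ioo 0 1) : 1 ≤ a α (n + 1) :=
  Nat.le_floor <| by simpa using (one_lt_inv₀ h.1).2 h.2 |>.le

theorem one_le_q (h : 1 ≤ a α 1) (n : ℕ) : 1 ≤ q α n := by
  induction n using Nat.twoStepInduction with
  | zero => rfl
  | one => exact h
  | more n ih₀ _ => exact ih₀.trans (Nat.le_add_left _ _)

theorem q_mul_p_succ_sub (n : ℕ) :
    (q α n : ℤ) * p α (n + 1) - q α (n + 1) * p α n = (-1) ^ n := by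
  induction n with
  | zero => simp [p, q]
  | succ n ih =>
    simp only [q, p, Nat.cast_add, Nat.cast_mul, pow_succ]
    linear_combination -ih

theorem θ_add_two (n : ℕ) : θ α (n + 2) = a α (n + 2) * θ α (n + 1) + θ α n := by
  simp only [θ, q, p, Nat.cast_add, Nat.cast_mul]
  ring

theorem θ_succ (hG : ∀ n, 0 < G α n) (n : ℕ) : θ α (n + 1) = -G α (n + 1) * θ α n := by
  induction n with
  | zero =>
    have hinv : α⁻¹ = a α 1 + G α 1 := inv_G_eq (n := 0) (hG 0).le
    have ha : (a α 1 : ℝ) = α⁻¹ - G α 1 := by rw [hinv]; ring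
    have hα : α ≠ 0 := (hG 0).ne'
    simp only [θ, q, p, ha]
    field_simp
    ring
  | succ n ih =>
    have ha : (a α (n + 2) : ℝ) = (G α (n + 1))⁻¹ - G α (n + 2) := by
      rw [inv_G_eq (hG _).le]; ring
    have hG₁ : G α (n + 1) ≠ 0 := (hG _).ne'
    rw [θ_add_two, ha, ih]
    field_simp
    ring

theorem abs_θ_add_two_le (hG : ∀ n, G α n ∈ Set.Ioo 0 1) (n : ℕ) :
    |θ α (n + 2)| ≤ |θ α n| / 2 := by
  have hpos n : 0 < G α n := (hG n).1
  -- `G (n+1) * (1 + G (n+2)) ≤ G (n+1) * (a (n+2) + G (n+2)) = 1` and `G (n+2) < 1`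
  have hprod : G α (n + 1) * G α (n + 2) ≤ 1 / 2 := by
    have ha : (1 : ℝ) ≤ a α (n + 2) := by exact_mod_cast one_le_a_succ (hG (n + 1))
    have hinv : (G α (n + 1))⁻¹ = a α (n + 2) + G α (n + 2) := inv_G_eq (hpos _).le
    have hone : G α (n + 1) * (a α (n + 2) + G α (n + 2)) = 1 := by
      rw [← hinv, mul_inv_cancel₀ (hpos _).ne']
    nlinarith [(hG (n + 2)).2, hpos (n + 1), hpos (n + 2)]
  rw [θ_succ hpos, θ_succ hpos, show -G α (n + 1 + 1) * (-G α (n + 1) * θ α n)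
    = (G α (n + 1) * G α (n + 2)) * θ α n by ring, abs_mul,
    abs_of_pos (mul_pos (hpos _) (hpos _))]
  nlinarith [abs_nonneg (θ α n)]

theorem tendsto_θ (hG : ∀ n, G α n ∈ Set.Ioo 0 1) : Tendsto (θ α) atTop (𝓝 0) :=
  tendsto_zero_of_abs_add_two_le_half (abs_θ_add_two_le hG)

theorem exists_eventually_eq_of_recurrence {r : ℕ → ℤ}
    (hr : ∀ᶠ n in atTop, r (n + 2) = a α (n + 2) * r (n + 1) + r n) :
    ∃ k l : ℤ, ∀ᶠ n in atTop, r n = k * q α n + l * p α n := by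
  obtain ⟨N, hN⟩ := eventually_atTop.1 hr
  obtain ⟨k, l, hkl⟩ := exists_eq_linear_combination_of_recurrence
    (c := fun m => (a α (N + m + 2) : ℤ)) (u := fun m => (q α (N + m) : ℤ))
    (v := fun m => (p α (N + m) : ℤ)) (r := fun m => r (N + m))
    (fun m => by exact_mod_cast (rfl : q α (N + m + 2) = _))
    (fun m => by exact_mod_cast (rfl : p α (N + m + 2) = _))
    (fun m => hN (N + m) le_self_add)
    (by simpa only [add_zero, q_mul_p_succ_sub] using (isUnit_neg_one (α := ℤ)).pow N)
  refine ⟨k, l, eventually_atTop.2 ⟨N, fun n hn => ?_⟩⟩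
  obtain ⟨m, rfl⟩ := Nat.exists_eq_add_of_le hn
  exact hkl m

theorem eventually_round_q_mul_add_two {M : ℕ} (hbd : ∀ n, 1 ≤ n → a α n ≤ M) {β : ℝ}
    (h : Tendsto (fun n => (q α n : ℝ) * β - round ((q α n : ℝ) * β)) atTop (𝓝 0)) :
    ∀ᶠ n in atTop, round ((q α (n + 2) : ℝ) * β)
      = a α (n + 2) * round ((q α (n + 1) : ℝ) * β) + round ((q α n : ℝ) * β) := by
  have hδ : (0 : ℝ) < 1 / (M + 2) := by positivity
  obtain ⟨N, hN⟩ := eventually_atTop.1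
    (((tendsto_zero_iff_abs_tendsto_zero _).1 h).eventually (gt_mem_nhds hδ))
  refine eventually_atTop.2 ⟨N, fun n hn => round_eq_mul_round_add_round ?_ ?_
    (hN n hn) (hN (n + 1) (by omega)) (hN (n + 2) (by omega))⟩
  · simp only [q]
    push_cast
    ring
  · have ha : (a α (n + 2) : ℝ) ≤ M := by exact_mod_cast hbd (n + 2) (by omega)
    rw [Int.cast_natCast, Nat.abs_cast, mul_one_div, div_le_one (by positivity)]
    linarith

theorem exists_eq_of_tendsto_q_smul (hG : ∀ n, G α n ∈ Set.Ioo 0 1) {M : ℕ}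
    (hbd : ∀ n, 1 ≤ n → a α n ≤ M) {β : ℝ}
    (h : Tendsto (fun n => (q α n : ℤ) • (β : Circle1)) atTop (𝓝 0)) :
    ∃ k l : ℤ, β = k * α + l := by
  have hε : Tendsto (fun n => (q α n : ℝ) * β - round ((q α n : ℝ) * β)) atTop (𝓝 0) := by
    simpa using tendsto_sub_round_of_tendsto_zsmul h
  obtain ⟨k, l, hkl⟩ := exists_eventually_eq_of_recurrence
    (r := fun n => round ((q α n : ℝ) * β)) (eventually_round_q_mul_add_two hbd hε)
  have hlim : Tendsto (fun n => (q α n : ℝ) * (β - l * α - k)) atTop (𝓝 0) := by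
    have := hε.sub ((tendsto_θ hG).const_mul (l : ℝ))
    rw [mul_zero, sub_zero] at this
    refine this.congr' (hkl.mono fun n hn => ?_)
    rw [hn, θ]
    push_cast
    ring
  have hq (n : ℕ) : (1 : ℝ) ≤ |(q α n : ℝ)| := by
    rw [Nat.abs_cast, Nat.one_le_cast]
    exact one_le_q (one_le_a_succ (hG 0)) n
  have hzero : |β - l * α - k| ≤ 0 :=
    ge_of_tendsto' ((tendsto_zero_iff_abs_tendsto_zero _).1 hlim) fun n => by
      rw [Function.comp_apply, abs_mul]
      exact le_mul_of_one_le_left (abs_nonneg _) (hq n)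
  exact ⟨l, k, by linarith [abs_nonpos_iff.1 hzero]⟩

theorem tendsto_q_smul_of_eq (hG : ∀ n, G α n ∈ Set.Ioo 0 1) (k l : ℤ) :
    Tendsto (fun n => (q α n : ℤ) • ((k * α + l : ℝ) : Circle1)) atTop (𝓝 0) := by
  have hθ : Tendsto (fun n => ((k * θ α n : ℝ) : Circle1)) atTop (𝓝 0) := by
    have h := (tendsto_θ hG).const_mul (k : ℝ)
    rw [mul_zero] at h
    exact ((AddCircle.continuous_mk' 1).tendsto 0).comp h
  refine hθ.congr fun n => ?_
  rw [← AddCircle.coe_zsmul, zsmul_eq_mul, ← sub_eq_zero, ← AddCircle.coe_sub,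
    AddCircle.coe_eq_zero_iff]
  refine ⟨-(k * p α n + l * q α n), ?_⟩
  simp only [θ, zsmul_eq_mul, Int.cast_neg, Int.cast_add, Int.cast_mul, Int.cast_natCast]
  ring

end CF

/-- **Larcher's theorem.** For bounded partial quotients, `t_(qₙ)(𝕋) = ⟨α⟩`; that is,
`‖qₙβ‖ → 0` iff `β ∈ ⟨α⟩ + ℤ`. -/
theorem stmt_19 (α : ℝ) (hα : α ∈ Set.Ioo (0 : ℝ) 1) (hirr : Irrational α)
    (M : ℕ) (hbd : ∀ n, 1 ≤ n → a α n ≤ M) :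
    charSet (fun n => (q α n : ℤ)) =
        (AddSubgroup.zmultiples ((α : Circle1)) : Set Circle1) ∧
      ∀ β : ℝ, Tendsto (fun n => (q α n : ℤ) • (↑β : Circle1)) atTop (𝓝 0) ↔
        ∃ k l : ℤ, β = (k : ℝ) * α + (l : ℝ) := by
  have hG := G_mem_Ioo hα hirr
  have key (β : ℝ) : Tendsto (fun n => (q α n : ℤ) • (↑β : Circle1)) atTop (𝓝 0) ↔
      ∃ k l : ℤ, β = (k : ℝ) * α + (l : ℝ) :=
    ⟨exists_eq_of_tendsto_q_smul hG hbd, fun ⟨k, l, hβ⟩ => hβ ▸ tendsto_q_smul_of_eq hG k l⟩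
  refine ⟨Set.ext fun x => ?_, key⟩
  obtain ⟨β, rfl⟩ := QuotientAddGroup.mk_surjective x
  exact (key β).trans (mem_zmultiples_coe_iff α β).symm
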